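/- arXiv:2009.10542 — 6 statements merged into one kernel-verified Lean document; each statement's English description precedes it below -/
import Mathlib

section
/- If C is a corpus model (a probability distribution over A*) such that the L¹ norm of the context vector of the empty string is finite, then for every nonempty string x ∈ A*, the context-theoretic probability φ(x̂) = ‖x̂‖₁ / ‖ε̂‖₁ satisfies φ(x̂) < 1, while φ(ε̂) = 1. -/
/-!
Inserting a nonempty string `x` between the two halves of a split `(u, v)` is an injective map
on splits, `(u, v) ↦ (u, x ++ v)`, which satisfies `u ++ x ++ v = u ++ (x ++ v)`. Hence `‖x̂‖₁` is
the part of the sum `‖ε̂‖₁ = ∑ C(u ++ v)` over the image of that map. The image misses every split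
`(d, [])`, and since `C` is a probability distribution some document `d` has `C d > 0`, so the
inequality is strict.
-/

open Function

theorem tsum_comp_lt_tsum_of_injective {α β : Type*} {f : β → ℝ} (hf₀ : ∀ y, 0 ≤ f y)
    (hf : Summable f) {e : α → β} (he : Injective e) {b : β} (hb : b ∉ Set.range e)
    (hfb : 0 < f b) : ∑' a, f (e a) < ∑' y, f y := by
  rw [← tsum_range f he, tsum_subtype]
  exact Summable.tsum_lt_tsum (i := b) (Set.indicator_le_self' fun y _ => hf₀ y)
    (by simpa [hb] using hfb) (hf.indicator _) hf

theorem tsum_append_infix_lt_tsum_append {A : Type*} {C : List A → ℝ} (hC : ∀ d, 0 ≤ C d)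
    (hfin : Summable fun p : List A × List A => C (p.1 ++ p.2)) {x : List A} (hx : x ≠ [])
    {d : List A} (hd : 0 < C d) :
    ∑' p : List A × List A, C (p.1 ++ x ++ p.2) < ∑' p : List A × List A, C (p.1 ++ p.2) := by
  have hinj : Injective fun p : List A × List A => (p.1, x ++ p.2) :=
    fun p q hpq => Prod.ext (Prod.ext_iff.1 hpq).1 (List.append_cancel_left (Prod.ext_iff.1 hpq).2)
  have hmiss : (d, []) ∉ Set.range fun p : List A × List A => (p.1, x ++ p.2) := by
    rintro ⟨p, hp⟩
    exact hx (List.append_eq_nil_iff.1 (Prod.ext_iff.1 hp).2).1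
  simpa only [List.append_assoc] using
    tsum_comp_lt_tsum_of_injective (fun _ => hC _) hfin hinj hmiss (by simpa using hd)

theorem stmt0_general (A : Type*) (C : List A → ℝ)
    (hC : ∀ d, 0 ≤ C d) (hprob : ∑' d : List A, C d = 1)
    (hfin : Summable (fun p : List A × List A => C (p.1 ++ p.2))) :
    (∀ x : List A, x ≠ [] →
      (∑' p : List A × List A, C (p.1 ++ x ++ p.2)) /
        (∑' p : List A × List A, C (p.1 ++ p.2)) < 1) ∧
    (∑' p : List A × List A, C (p.1 ++ ([] : List A) ++ p.2)) /
        (∑' p : List A × List A, C (p.1 ++ p.2)) = 1 := by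
  obtain ⟨d, hd⟩ : ∃ d, 0 < C d := by
    by_contra! h
    have hC₀ : C = 0 := funext fun d => le_antisymm (h d) (hC d)
    simp [hC₀] at hprob
  have hε : 0 < ∑' p : List A × List A, C (p.1 ++ p.2) :=
    hfin.tsum_pos (fun _ => hC _) (d, []) (by simpa using hd)
  refine ⟨fun x hx => (div_lt_one hε).2 (tsum_append_infix_lt_tsum_append hC hfin hx hd), ?_⟩
  simpa only [List.append_nil] using div_self hε.ne'

/-- For a corpus model `C` (a probability distribution over `A*`) with finite
`‖ε̂‖₁`, the context-theoretic probability `φ(x̂) = ‖x̂‖₁ / ‖ε̂‖₁` satisfies `φ(x̂) < 1` for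
every nonempty string `x`, while `φ(ε̂) = 1`. -/
theorem stmt0 (A : Type*) [Fintype A] (C : List A → ℝ)
    (hC : ∀ d, 0 ≤ C d) (hprob : ∑' d : List A, C d = 1)
    (hfin : Summable (fun p : List A × List A => C (p.1 ++ p.2))) :
    (∀ x : List A, x ≠ [] →
      (∑' p : List A × List A, C (p.1 ++ x ++ p.2)) /
        (∑' p : List A × List A, C (p.1 ++ p.2)) < 1) ∧
    (∑' p : List A × List A, C (p.1 ++ ([] : List A) ++ p.2)) /
        (∑' p : List A × List A, C (p.1 ++ p.2)) = 1 :=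
  stmt0_general A C hC hprob hfin
end

section
/- Multiplication on the subspace generated by context vectors of a corpus model is well defined independently of the choice of basis: if B₁, B₂ ⊆ A* are two sets of strings whose context vectors each form a basis of the generated subspace, then the bilinear products defined by û·v̂ = (uv)^ on the two bases coincide. -/
/-!
A bilinear map `m` with `m û v̂ = (uv)^` on a spanning set `B` already satisfies this rule for
all strings. Indeed, for `b ∈ B` the linear maps `m b̂` and `f ↦ f(· ++ b, ·)` agree on the
spanning vectors `v̂`, since both send `v̂` to `(bv)^`; hence `m b̂ ŷ = (by)^` for every `y`.
Symmetrically, `f ↦ m f ŷ` and `f ↦ f(·, y ++ ·)` agree on `B`, so `m x̂ ŷ = (xy)^`.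
Two such products thus agree on all pairs of context vectors, hence on their span.
-/

namespace LinearMap

variable {R M N P : Type*} [CommSemiring R] [AddCommMonoid M] [AddCommMonoid N]
  [AddCommMonoid P] [Module R M] [Module R N] [Module R P]

theorem eqOn_span₂ {s : Set M} {t : Set N} {m₁ m₂ : M →ₗ[R] N →ₗ[R] P}
    (h : ∀ x ∈ s, ∀ y ∈ t, m₁ x y = m₂ x y) {x : M} (hx : x ∈ Submodule.span R s)
    {y : N} (hy : y ∈ Submodule.span R t) : m₁ x y = m₂ x y := by
  have hleft : ∀ x ∈ s, m₁ x y = m₂ x y := fun x hxs =>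
    eqOn_span (f := m₁ x) (g := m₂ x) (h x hxs) hy
  exact eqOn_span (f := m₁.flip y) (g := m₂.flip y) hleft hx

end LinearMap

namespace CorpusModel

variable {A : Type*}

def contextVector (C : List A → ℝ) (x : List A) : List A × List A → ℝ :=
  fun p => C (p.1 ++ x ++ p.2)

def extendLeft (u : List A) : (List A × List A → ℝ) →ₗ[ℝ] (List A × List A → ℝ) where
  toFun f p := f (p.1 ++ u, p.2)
  map_add' _ _ := rfl
  map_smul' _ _ := rfl

def extendRight (w : List A) : (List A × List A → ℝ) →ₗ[ℝ] (List A × List A → ℝ) where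
  toFun f p := f (p.1, w ++ p.2)
  map_add' _ _ := rfl
  map_smul' _ _ := rfl

variable (C : List A → ℝ)

theorem extendLeft_contextVector (u w : List A) :
    extendLeft u (contextVector C w) = contextVector C (u ++ w) := by
  funext p
  simp [extendLeft, contextVector, List.append_assoc]

theorem extendRight_contextVector (w u : List A) :
    extendRight w (contextVector C u) = contextVector C (u ++ w) := by
  funext p
  simp [extendRight, contextVector, List.append_assoc]

theorem apply_contextVector_eq_of_span {B : Set (List A)}
    (hB : Set.range (contextVector C) ⊆ Submodule.span ℝ (contextVector C '' B))
    {m : (List A × List A → ℝ) →ₗ[ℝ] (List A × List A → ℝ) →ₗ[ℝ] (List A × List A → ℝ)}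
    (hm : ∀ u ∈ B, ∀ v ∈ B, m (contextVector C u) (contextVector C v) =
      contextVector C (u ++ v))
    (x y : List A) :
    m (contextVector C x) (contextVector C y) = contextVector C (x ++ y) := by
  have hleft : ∀ b ∈ B, m (contextVector C b) (contextVector C y) =
      contextVector C (b ++ y) := by
    intro b hb
    have hagree : Set.EqOn (m (contextVector C b)) (extendLeft b) (contextVector C '' B) := by
      rintro _ ⟨v, hv, rfl⟩
      rw [hm b hb v hv, extendLeft_contextVector]
    rw [LinearMap.eqOn_span hagree (hB ⟨y, rfl⟩), extendLeft_contextVector]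
  have hagree : Set.EqOn (m.flip (contextVector C y)) (extendRight y)
      (contextVector C '' B) := by
    rintro _ ⟨b, hb, rfl⟩
    rw [LinearMap.flip_apply, hleft b hb, extendRight_contextVector]
  rw [← LinearMap.flip_apply (f := m), LinearMap.eqOn_span hagree (hB ⟨x, rfl⟩),
    extendRight_contextVector]

end CorpusModel

open CorpusModel in
/-- Multiplication on the subspace generated by context vectors of a corpus model
is well defined independently of the choice of basis: if `B₁, B₂ ⊆ A*` are two sets of strings
whose context vectors each form a basis of the generated subspace, then the bilinear products
defined by `û·v̂ = (uv)^` on the two bases coincide on the generated subspace. -/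
theorem stmt2 (A : Type*) (C : List A → ℝ) :
    let hat : List A → (List A × List A) → ℝ := fun x p => C (p.1 ++ x ++ p.2)
    let V : Submodule ℝ ((List A × List A) → ℝ) := Submodule.span ℝ (Set.range hat)
    ∀ (B₁ B₂ : Set (List A)),
      LinearIndependent ℝ (fun b : B₁ => hat b.1) →
      Submodule.span ℝ (hat '' B₁) = V →
      LinearIndependent ℝ (fun b : B₂ => hat b.1) →
      Submodule.span ℝ (hat '' B₂) = V →
      ∀ (m₁ m₂ : ((List A × List A) → ℝ) →ₗ[ℝ] ((List A × List A) → ℝ) →ₗ[ℝ]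
          ((List A × List A) → ℝ)),
        (∀ u ∈ B₁, ∀ v ∈ B₁, m₁ (hat u) (hat v) = hat (u ++ v)) →
        (∀ u ∈ B₂, ∀ v ∈ B₂, m₂ (hat u) (hat v) = hat (u ++ v)) →
        ∀ f ∈ V, ∀ g ∈ V, m₁ f g = m₂ f g := by
  intro hat V B₁ B₂ _ hspan₁ _ hspan₂ m₁ m₂ hm₁ hm₂
  have hB₁ : Set.range (contextVector C) ⊆ Submodule.span ℝ (contextVector C '' B₁) :=
    hspan₁ ▸ Submodule.subset_span
  have hB₂ : Set.range (contextVector C) ⊆ Submodule.span ℝ (contextVector C '' B₂) :=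
    hspan₂ ▸ Submodule.subset_span
  refine fun f hf g hg => LinearMap.eqOn_span₂ ?_ hf hg
  rintro _ ⟨x, rfl⟩ _ ⟨y, rfl⟩
  exact (apply_contextVector_eq_of_span C hB₁ hm₁ x y).trans
    (apply_contextVector_eq_of_span C hB₂ hm₂ x y).symm
end

section
/- The distance-preserving completion of a tree taxonomy realizes the Jiang–Conrath distance as an ℓ¹ distance: if S is a finite probabilistic taxonomy that is a tree, and ψ' maps each concept x to the vector ∑_{y ≥ x} f_IC(y) e_y where f_IC(y) = IC(y) − IC(Par(y)) (and f_IC(root) = 0), then ‖ψ'(x)‖₁ = IC(x) and ‖ψ'(x) − ψ'(y)‖₁ = IC(x) + IC(y) − 2·IC(x ∨ y), where x ∨ y is the least common subsumer. -/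
/-!
Since the up-set of `x` is `x` followed by the up-set of `Par x` (the ancestors of `x` form a
chain and `Par x` covers `x`), the sum of `f_IC` over it telescopes to `IC x − IC ⊤ = IC x`.
As `f_IC ≥ 0`, the ℓ¹ distance between two indicators of `f_IC` is the sum over the symmetric
difference of the up-sets, and the up-sets of `x` and `y` meet exactly in the up-set of `x ⊔ y`.
-/

open Set

theorem Set.Ici_eq_insert_Ici_of_covBy {α : Type*} [PartialOrder α] {x p : α}
    (hchain : IsChain (· ≤ ·) (Ici x)) (hxp : x ⋖ p) : Ici x = insert x (Ici p) := by
  refine Subset.antisymm (fun z (hxz : x ≤ z) => ?_)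
    (insert_subset self_mem_Ici (Ici_subset_Ici.2 hxp.le))
  obtain rfl | hxz := hxz.eq_or_lt
  · exact mem_insert _ _
  refine Or.inr ((hchain.total hxz.le hxp.le).elim (fun hzp => ?_) id)
  obtain hzp | rfl := hzp.lt_or_eq
  · exact (hxp.2 hxz hzp).elim
  · exact self_mem_Ici

theorem Fintype.sum_indicator_insert {ι M : Type*} [Fintype ι] [AddCommMonoid M] {a : ι}
    {s : Set ι} (ha : a ∉ s) (f : ι → M) :
    ∑ z, (insert a s).indicator f z = f a + ∑ z, s.indicator f z := by
  classical
  rw [insert_eq, indicator_union_of_disjoint (disjoint_singleton_left.2 ha),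
    Finset.sum_add_distrib]
  simp [indicator_apply]

theorem sum_indicator_Ici_eq_of_telescoping {S M : Type*} [Fintype S] [PartialOrder S]
    [OrderTop S] [AddCommGroup M] {Par : S → S} (hchain : ∀ x : S, IsChain (· ≤ ·) (Ici x))
    (hpar : ∀ y : S, y ≠ ⊤ → y ⋖ Par y) {f h : S → M} (htop : f ⊤ = h ⊤)
    (hf : ∀ y : S, y ≠ ⊤ → f y = h y - h (Par y)) (x : S) :
    ∑ z, (Ici x).indicator f z = h x := by
  induction x using WellFoundedGT.induction with
  | _ x ih =>
  by_cases hx : x = ⊤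
  · subst hx
    classical
    simp [Ici_top, indicator_apply, htop]
  · have hcov := hpar x hx
    rw [Ici_eq_insert_Ici_of_covBy (hchain x) hcov,
      Fintype.sum_indicator_insert (s := Ici (Par x)) hcov.lt.not_ge, ih _ hcov.lt, hf x hx,
      sub_add_cancel]

theorem abs_indicator_sub_indicator {α R : Type*} [Ring R] [LinearOrder R] [IsOrderedRing R]
    {f : α → R} (hf : ∀ a, 0 ≤ f a) (s t : Set α) (a : α) :
    |s.indicator f a - t.indicator f a| =
      s.indicator f a + t.indicator f a - 2 * (s ∩ t).indicator f a := by
  classical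
  by_cases hs : a ∈ s <;> by_cases ht : a ∈ t <;>
    simp [hs, ht, abs_of_nonneg (hf a), two_mul]

/-- The distance-preserving completion of a tree taxonomy realizes the
Jiang–Conrath distance as an ℓ¹ distance: if `S` is a finite probabilistic taxonomy which is
a tree (ancestors of each element form a chain, each non-root element is covered by its
parent, there is a top, and least common subsumers `x ⊔ y` exist) and `ψ'` maps each concept
`x` to `∑_{y ≥ x} f_IC(y) e_y` with `f_IC(y) = IC(y) − IC(Par(y))` and `f_IC(⊤) = 0`, then
`‖ψ'(x)‖₁ = IC(x)` and `‖ψ'(x) − ψ'(y)‖₁ = IC(x) + IC(y) − 2·IC(x ⊔ y)`. -/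
theorem stmt12 (S : Type*) [Fintype S] [SemilatticeSup S] [OrderTop S] [DecidableEq S]
    (Par : S → S) (IC : S → ℝ)
    (hchain : ∀ x : S, IsChain (· ≤ ·) (Set.Ici x))
    (hpar : ∀ y : S, y ≠ ⊤ → y ⋖ Par y)
    (hICtop : IC (⊤ : S) = 0)
    (hICanti : ∀ x y : S, x ≤ y → IC y ≤ IC x) :
    let f : S → ℝ := fun y => if y = ⊤ then 0 else IC y - IC (Par y)
    let ψ : S → S → ℝ := fun x => Set.indicator (Set.Ici x) f
    (∀ x : S, ∑ z, |ψ x z| = IC x) ∧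
    (∀ x y : S, ∑ z, |ψ x z - ψ y z| = IC x + IC y - 2 * IC (x ⊔ y)) := by
  intro f ψ
  have hf : ∀ y, 0 ≤ f y := fun y => by
    by_cases hy : y = ⊤
    · simp [f, hy]
    · simpa [f, hy] using hICanti _ _ (hpar y hy).le
  have hψ : ∀ x, ∑ z, (Ici x).indicator f z = IC x :=
    sum_indicator_Ici_eq_of_telescoping hchain hpar (by simp [f, hICtop]) fun y hy => if_neg hy
  simp only [ψ]
  refine ⟨fun x => ?_, fun x y => ?_⟩
  · simp_rw [abs_of_nonneg (indicator_nonneg (fun z _ => hf z) _), hψ]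
  · simp_rw [abs_indicator_sub_indicator hf, Ici_inter_Ici, Finset.sum_sub_distrib,
      Finset.sum_add_distrib, ← Finset.mul_sum]
    rw [hψ, hψ, hψ]
end

section
/- The chain completion preserves order and measure: if S is a real-valued taxonomy and 𝒞 = {C₁,…,Cₙ} a covering collection of chains, then the map ξ(x) = ∑_{y ≤ x} ξ₀(y) into ℝⁿ, where ξ₀(y) distributes p(y) equally over the coordinates of chains containing y, is an order embedding (ξ(u) ≤ ξ(v) iff u ≤ v) satisfying ‖ξ(x)‖₁ = p̂(x). -/
/-!
Each coordinate `ξ(x)ᵢ` is the `p`-weight of the part of chain `Cᵢ` below `x`, shared with the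
other chains through the same points. Monotonicity is clear since all weights are nonnegative.
Conversely, if `u ≰ v`, take a chain `Cᵢ ∋ u`: every `y ∈ Cᵢ` below `v` is comparable with `u`
and cannot lie above it, so `Cᵢ ∩ ↓v ⊊ Cᵢ ∩ ↓u` and `ξ(v)ᵢ < ξ(u)ᵢ`. For the norm, summing the
shares of `y` over all coordinates gives back `p(y)`.
-/

open Finset

lemma IsChain.filter_le_subset_of_not_le {S : Type*} [Preorder S]
    [DecidableRel ((· ≤ ·) : S → S → Prop)] {C : Finset S} (hC : IsChain (· ≤ ·) (C : Set S))
    {u v : S} (hu : u ∈ C) (huv : ¬u ≤ v) : {y ∈ C | y ≤ v} ⊆ {y ∈ C | y ≤ u} := by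
  intro y hy
  rw [mem_filter] at hy ⊢
  exact ⟨hy.1, (hC.total hy.1 hu).resolve_right fun huy => huv (huy.trans hy.2)⟩

lemma monotone_sum_filter_le {S ι : Type*} [Fintype S] [Preorder S]
    [DecidableRel ((· ≤ ·) : S → S → Prop)] {w : S → ι → ℝ} (hw : ∀ y i, 0 ≤ w y i) :
    Monotone fun x i => ∑ y ∈ univ.filter (· ≤ x), w y i := fun _ _ hxy i =>
  sum_le_sum_of_subset_of_nonneg (fun y hy => by simpa using (mem_filter.mp hy).2.trans hxy)
    fun y _ _ => hw y i

namespace ChainCompletion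

variable {S ι : Type*} [Fintype ι] [DecidableEq S] (p : S → ℝ) (Ch : ι → Finset S)

/-- `ξ₀(y)ᵢ` in the notation of the paper. -/
noncomputable def share (y : S) (i : ι) : ℝ :=
  if y ∈ Ch i then p y / (#{j | y ∈ Ch j} : ℝ) else 0

/-- `ξ(x)ᵢ` in the notation of the paper. -/
noncomputable def completion [Fintype S] [Preorder S] [DecidableRel ((· ≤ ·) : S → S → Prop)]
    (x : S) (i : ι) : ℝ :=
  ∑ y ∈ univ.filter (· ≤ x), share p Ch y i

variable {p Ch}

lemma share_nonneg (hp : ∀ x, 0 ≤ p x) (y : S) (i : ι) : 0 ≤ share p Ch y i := by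
  unfold share
  split_ifs
  · exact div_nonneg (hp y) (Nat.cast_nonneg _)
  · exact le_rfl

lemma share_pos {y : S} {i : ι} (hp : 0 < p y) (hy : y ∈ Ch i) : 0 < share p Ch y i := by
  have hcard : 0 < #{j | y ∈ Ch j} := card_pos.mpr ⟨i, by simpa using hy⟩
  rw [share, if_pos hy]
  positivity

lemma sum_share {y : S} (hy : ∃ i, y ∈ Ch i) : ∑ i, share p Ch y i = p y := by
  obtain ⟨i, hi⟩ := hy
  have hcard : (#{j | y ∈ Ch j} : ℝ) ≠ 0 :=
    Nat.cast_ne_zero.mpr (card_pos.mpr ⟨i, by simpa using hi⟩).ne'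
  simp only [share]
  rw [← sum_filter, sum_const, nsmul_eq_mul, mul_div_cancel₀ _ hcard]

variable [Fintype S] [Preorder S] [DecidableRel ((· ≤ ·) : S → S → Prop)]

lemma completion_eq_sum_chain (x : S) (i : ι) :
    completion p Ch x i = ∑ y ∈ {y ∈ Ch i | y ≤ x}, share p Ch y i := by
  rw [completion, sum_filter, sum_filter]
  refine (sum_subset (subset_univ _) fun y _ hy => ?_).symm.trans (sum_congr rfl fun y _ => ?_)
  · simp [hy, share]
  · by_cases hy : y ∈ Ch i <;> simp [hy, share]

lemma monotone_completion (hp : ∀ x, 0 ≤ p x) : Monotone (completion p Ch) :=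
  monotone_sum_filter_le (share_nonneg hp)

lemma completion_lt_of_not_le (hp : ∀ x, 0 < p x) {i : ι} (hchain : IsChain (· ≤ ·) (Ch i : Set S))
    {u v : S} (hu : u ∈ Ch i) (huv : ¬u ≤ v) : completion p Ch v i < completion p Ch u i := by
  rw [completion_eq_sum_chain, completion_eq_sum_chain]
  exact sum_lt_sum_of_subset (hchain.filter_le_subset_of_not_le hu huv)
    (mem_filter.mpr ⟨hu, le_rfl⟩) (fun h => huv (mem_filter.mp h).2) (share_pos (hp u) hu)
    fun y _ _ => share_nonneg (fun x => (hp x).le) y i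

lemma le_of_completion_le (hp : ∀ x, 0 < p x) (hchain : ∀ i, IsChain (· ≤ ·) (Ch i : Set S))
    (hcover : ∀ x, ∃ i, x ∈ Ch i) {u v : S} (h : completion p Ch u ≤ completion p Ch v) :
    u ≤ v := by
  by_contra huv
  obtain ⟨i, hu⟩ := hcover u
  exact (h i).not_gt (completion_lt_of_not_le hp (hchain i) hu huv)

lemma sum_abs_completion (hp : ∀ x, 0 ≤ p x) (hcover : ∀ x, ∃ i, x ∈ Ch i) (x : S) :
    ∑ i, |completion p Ch x i| = ∑ y ∈ univ.filter (· ≤ x), p y := by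
  simp_rw [completion, abs_of_nonneg (sum_nonneg fun y _ => share_nonneg hp y _)]
  rw [sum_comm]
  exact sum_congr rfl fun y _ => sum_share (hcover y)

end ChainCompletion

open ChainCompletion

/-- The chain completion preserves order and measure: for a finite real-valued
taxonomy `S` with `p > 0` and a covering collection of chains `C₁,…,Cₙ`, the map
`ξ(x) = ∑_{y ≤ x} ξ₀(y)` into `ℝⁿ` — where `ξ₀(y)` distributes `p(y)` equally over the
coordinates of the chains containing `y` — is an order embedding with `‖ξ(x)‖₁ = p̂(x)`. -/
theorem stmt13 (S : Type*) [Fintype S] [PartialOrder S] [DecidableEq S]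
    [DecidableRel ((· ≤ ·) : S → S → Prop)]
    (p : S → ℝ) (hp : ∀ x, 0 < p x) (n : ℕ) (Ch : Fin n → Finset S)
    (hchain : ∀ i, IsChain (· ≤ ·) ((Ch i : Finset S) : Set S))
    (hcover : ∀ x : S, ∃ i, x ∈ Ch i) :
    let ξ : S → Fin n → ℝ := fun x i => ∑ y ∈ Finset.univ.filter (· ≤ x),
      (if y ∈ Ch i then p y / ((Finset.univ.filter (fun j => y ∈ Ch j)).card : ℝ) else 0)
    (∀ u v : S, ξ u ≤ ξ v ↔ u ≤ v) ∧
    (∀ x : S, ∑ i, |ξ x i| = ∑ y ∈ Finset.univ.filter (· ≤ x), p y) := by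
  have hp' : ∀ x, 0 ≤ p x := fun x => (hp x).le
  show (∀ u v, completion p Ch u ≤ completion p Ch v ↔ u ≤ v) ∧
    ∀ x, ∑ i, |completion p Ch x i| = ∑ y ∈ univ.filter (· ≤ x), p y
  exact ⟨fun u v => ⟨le_of_completion_le hp hchain hcover, fun h => monotone_completion hp' h⟩,
    sum_abs_completion hp' hcover⟩
end

section
/- Every bracket semigroup is an inverse semigroup: in the semigroup D(L)*/≡ generated by left connectors |x⟩ and right connectors ⟨x| (x ∈ L) with relations ⟨x||y⟩ = 0 for x ≠ y, ⟨x||x⟩ = 1, and 0 absorbing, each element w = x₁x₂…xₙ has a unique generalized inverse w⁻¹ = xₙ⁻¹…x₁⁻¹ (with |x⟩⁻¹ = ⟨x| and ⟨x|⁻¹ = |x⟩) satisfying w w⁻¹ w = w and w⁻¹ w w⁻¹ = w⁻¹. -/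
/-!
Every element of the bracket monoid is `0` or a normal form `|u⟩⟨v|` (the kets of the word `u`
followed by the bras of `v`). Letting kets push a letter onto a stack, bras pop a matching one and
`0` fail gives a faithful action on `Option (List L)`, so distinct normal forms are distinct
elements. Since `⟨v|·|v⟩ = 1`, `|u⟩⟨v|·|v⟩⟨u|·|u⟩⟨v| = |u⟩⟨v|`, which makes the reversed word
`w⁻¹` a generalized inverse of `w`. The idempotents are `0` and the `|u⟩⟨u|`, which act as partial
identities and hence commute; in a semigroup with commuting idempotents generalized inverses are
unique.
-/

theorem eq_of_inverses_of_idempotents_commute {M : Type*} [Semigroup M]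
    (hcomm : ∀ e f : M, IsIdempotentElem e → IsIdempotentElem f → Commute e f) {a x y : M}
    (hx₁ : a * x * a = a) (hx₂ : x * a * x = x) (hy₁ : a * y * a = a) (hy₂ : y * a * y = y) :
    x = y := by
  have idem {b c : M} (h : b * c * b = b) : IsIdempotentElem (b * c) := by
    rw [IsIdempotentElem, ← mul_assoc, h]
  have idem' {b c : M} (h : b * c * b = b) : IsIdempotentElem (c * b) := by
    rw [IsIdempotentElem, mul_assoc, ← mul_assoc b, h]
  calc x = x * a * x := hx₂.symm
    _ = x * (a * y * a) * x := by rw [hy₁]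
    _ = x * a * (y * a) * x := by simp only [mul_assoc]
    _ = y * a * (x * a) * x := by rw [(hcomm _ _ (idem hx₂) (idem hy₂)).eq]
    _ = y * a * (x * a * x) := by simp only [mul_assoc]
    _ = y * (a * y * a) * x := by rw [hx₂, hy₁]
    _ = y * (a * y * (a * x)) := by simp only [mul_assoc]
    _ = y * (a * x * (a * y)) := by rw [(hcomm _ _ (idem hy₁) (idem hx₁)).eq]
    _ = y * (a * x * a) * y := by simp only [mul_assoc]
    _ = y := by rw [hx₁, hy₂]

namespace BracketMonoid

variable {L : Type*}

abbrev D (L : Type*) := L ⊕ L ⊕ Unit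

def ket (x : L) : FreeMonoid (D L) := .of (.inl x)
def bra (x : L) : FreeMonoid (D L) := .of (.inr (.inl x))
def zeroLetter : FreeMonoid (D L) := .of (.inr (.inr ()))

def rel (a b : FreeMonoid (D L)) : Prop :=
  (∃ x y : L, x ≠ y ∧ a = bra x * ket y ∧ b = zeroLetter) ∨
  (∃ x : L, a = bra x * ket x ∧ b = 1) ∨
  (∃ w, a = zeroLetter * w ∧ b = zeroLetter) ∨ (∃ w, a = w * zeroLetter ∧ b = zeroLetter)

def bracketCon (L : Type*) : Con (FreeMonoid (D L)) := conGen rel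

abbrev Bracket (L : Type*) := (bracketCon L).Quotient

def mk : FreeMonoid (D L) →* Bracket L := (bracketCon L).mk'

theorem mk_surjective : Function.Surjective (mk : FreeMonoid (D L) → Bracket L) :=
  Con.mk'_surjective

theorem mk_eq_mk_of_rel {a b : FreeMonoid (D L)} (h : rel a b) : mk a = mk b :=
  (Con.eq _).2 (ConGen.Rel.of _ _ h)

instance : MonoidWithZero (Bracket L) where
  zero := mk zeroLetter
  zero_mul a := by
    obtain ⟨w, rfl⟩ := mk_surjective a
    exact (map_mul mk _ _).symm.trans (mk_eq_mk_of_rel (.inr (.inr (.inl ⟨w, rfl, rfl⟩))))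
  mul_zero a := by
    obtain ⟨w, rfl⟩ := mk_surjective a
    exact (map_mul mk _ _).symm.trans (mk_eq_mk_of_rel (.inr (.inr (.inr ⟨w, rfl, rfl⟩))))

theorem mk_bra_mul_ket_self (x : L) : mk (bra x * ket x) = 1 :=
  (mk_eq_mk_of_rel (.inr (.inl ⟨x, rfl, rfl⟩))).trans (map_one mk)

theorem mk_bra_mul_ket_of_ne {x y : L} (h : x ≠ y) : mk (bra x * ket y) = 0 :=
  mk_eq_mk_of_rel (.inl ⟨x, y, h, rfl, rfl⟩)

def kets (u : List L) : FreeMonoid (D L) := .ofList (u.map .inl)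

-- `bras v` lists the bras of `v` in reverse order, so that `bras v * kets v` collapses to `1`.
def bras (v : List L) : FreeMonoid (D L) := .ofList (v.reverse.map fun x => .inr (.inl x))

theorem kets_cons (x : L) (u : List L) : kets (x :: u) = ket x * kets u := rfl

theorem bras_cons (x : L) (v : List L) : bras (x :: v) = bras v * bra x := by
  simp only [bras, List.reverse_cons, List.map_append, FreeMonoid.ofList_append]; rfl

theorem bras_append_singleton (v : List L) (x : L) : bras (v ++ [x]) = bra x * bras v := by
  simp only [bras, List.reverse_append, List.map_append, FreeMonoid.ofList_append]; rfl

theorem mk_bras_mul_mk_kets (u : List L) : mk (bras u) * mk (kets u) = 1 := by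
  induction u with
  | nil => simp [bras, kets]
  | cons x u ih =>
    rw [bras_cons, kets_cons, map_mul, map_mul, mul_assoc, ← mul_assoc (mk (bra x)), ← map_mul,
      mk_bra_mul_ket_self, one_mul, ih]

def nf (u v : List L) : Bracket L := mk (kets u * bras v)

theorem nf_mul_nf (u v v' : List L) : nf u v * nf v v' = nf u v' := by
  simp only [nf, map_mul]
  rw [mul_assoc, ← mul_assoc (mk (bras v)), mk_bras_mul_mk_kets, one_mul]

theorem mk_ket_mul_nf (x : L) (u v : List L) : mk (ket x) * nf u v = nf (x :: u) v := by
  rw [nf, nf, kets_cons, ← map_mul, mul_assoc]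

theorem mk_bra_mul_nf_nil (x : L) (v : List L) : mk (bra x) * nf [] v = nf [] (v ++ [x]) := by
  rw [nf, nf, bras_append_singleton, ← map_mul]; rfl

theorem mk_bra_mul_nf_cons_self (x : L) (u v : List L) :
    mk (bra x) * nf (x :: u) v = nf u v := by
  rw [nf, nf, kets_cons, mul_assoc, map_mul, ← mul_assoc, ← map_mul, mk_bra_mul_ket_self, one_mul]

theorem mk_bra_mul_nf_cons_of_ne {x y : L} (h : x ≠ y) (u v : List L) :
    mk (bra x) * nf (y :: u) v = 0 := by
  rw [nf, kets_cons, mul_assoc, map_mul, ← mul_assoc, ← map_mul, mk_bra_mul_ket_of_ne h,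
    zero_mul]

theorem eq_zero_or_eq_nf (a : Bracket L) : a = 0 ∨ ∃ u v, a = nf u v := by
  obtain ⟨w, rfl⟩ := mk_surjective a
  induction w using FreeMonoid.inductionOn' with
  | one => exact .inr ⟨[], [], (map_one mk).symm⟩
  | of_mul x w ih =>
    rw [map_mul]
    obtain h | ⟨u, v, h⟩ := ih
    · exact .inl (by rw [h, mul_zero])
    rw [h]
    rcases x with x | x | ⟨⟨⟩⟩
    · exact .inr ⟨x :: u, v, mk_ket_mul_nf x u v⟩
    · rcases u with _ | ⟨y, u⟩
      · exact .inr ⟨[], v ++ [x], mk_bra_mul_nf_nil x v⟩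
      · by_cases hxy : x = y
        · subst hxy
          exact .inr ⟨u, v, mk_bra_mul_nf_cons_self x u v⟩
        · exact .inl (mk_bra_mul_nf_cons_of_ne hxy u v)
    · exact .inl (zero_mul _)

open scoped Classical in
noncomputable def step : D L → Function.End (Option (List L))
  | .inl x => Option.map (x :: ·)
  | .inr (.inl x) => (·.bind fun | y :: t => if y = x then some t else none | [] => none)
  | .inr (.inr ()) => fun _ => none

noncomputable def freeAct : FreeMonoid (D L) →* Function.End (Option (List L)) :=
  FreeMonoid.lift step

theorem freeAct_mul_apply (a b : FreeMonoid (D L)) (o : Option (List L)) :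
    freeAct (a * b) o = freeAct a (freeAct b o) := by
  rw [map_mul]; rfl

theorem freeAct_none (w : FreeMonoid (D L)) : freeAct w none = none := by
  induction w using FreeMonoid.inductionOn' with
  | one => rfl
  | of_mul x w ih => rcases x with _ | _ | _ <;> rw [freeAct_mul_apply, ih] <;> rfl

theorem freeAct_ket_apply (x : L) (t : List L) : freeAct (ket x) (some t) = some (x :: t) := rfl

theorem freeAct_bra_apply_cons_self (x : L) (t : List L) :
    freeAct (bra x) (some (x :: t)) = some t := by
  simp [freeAct, bra, step]

theorem freeAct_bra_apply_cons_of_ne {x y : L} (h : y ≠ x) (t : List L) :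
    freeAct (bra x) (some (y :: t)) = none := by
  simp [freeAct, bra, step, h]

theorem freeAct_bra_apply_nil (x : L) : freeAct (bra x) (some []) = none := rfl

theorem bracketCon_le_ker : bracketCon L ≤ Con.ker freeAct := by
  refine Con.conGen_le.2 ?_
  rintro _ _ (⟨x, y, hxy, rfl, rfl⟩ | ⟨x, rfl, rfl⟩ | ⟨w, rfl, rfl⟩ | ⟨w, rfl, rfl⟩) <;>
    refine funext fun o => ?_ <;> rw [freeAct_mul_apply]
  · rcases o with _ | t
    · rfl
    · exact (freeAct_ket_apply y t).symm ▸ freeAct_bra_apply_cons_of_ne (Ne.symm hxy) t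
  · rcases o with _ | t
    · rfl
    · exact (freeAct_ket_apply x t).symm ▸ freeAct_bra_apply_cons_self x t
  · rfl
  · exact freeAct_none w

noncomputable def act : Bracket L →* Function.End (Option (List L)) :=
  (bracketCon L).lift freeAct bracketCon_le_ker

theorem act_mk (w : FreeMonoid (D L)) : act (mk w) = freeAct w := rfl

theorem act_mul_apply (a b : Bracket L) (o : Option (List L)) :
    act (a * b) o = act a (act b o) := by
  rw [map_mul]; rfl

theorem act_none (a : Bracket L) : act a none = none := by
  obtain ⟨w, rfl⟩ := mk_surjective a
  exact freeAct_none w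

theorem act_zero (o : Option (List L)) : act (0 : Bracket L) o = none := rfl

theorem freeAct_kets (u t : List L) : freeAct (kets u) (some t) = some (u ++ t) := by
  induction u with
  | nil => rfl
  | cons x u ih => rw [kets_cons, freeAct_mul_apply, ih, freeAct_ket_apply, List.cons_append]

theorem freeAct_bras_append (v s : List L) : freeAct (bras v) (some (v ++ s)) = some s := by
  induction v with
  | nil => rfl
  | cons x v ih =>
    rw [bras_cons, freeAct_mul_apply, List.cons_append, freeAct_bra_apply_cons_self, ih]

theorem freeAct_bras_of_not_prefix {v t : List L} (h : ¬ v <+: t) :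
    freeAct (bras v) (some t) = none := by
  induction v generalizing t with
  | nil => exact absurd List.nil_prefix h
  | cons x v ih =>
    rw [bras_cons, freeAct_mul_apply]
    rcases t with _ | ⟨y, t⟩
    · rw [freeAct_bra_apply_nil, freeAct_none]
    · by_cases hyx : y = x
      · subst hyx
        rw [freeAct_bra_apply_cons_self, ih (by simpa using h)]
      · rw [freeAct_bra_apply_cons_of_ne hyx, freeAct_none]

theorem act_nf_append (u v s : List L) : act (nf u v) (some (v ++ s)) = some (u ++ s) := by
  rw [nf, act_mk, freeAct_mul_apply, freeAct_bras_append, freeAct_kets]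

theorem act_nf_of_not_prefix (u : List L) {v t : List L} (h : ¬ v <+: t) :
    act (nf u v) (some t) = none := by
  rw [nf, act_mk, freeAct_mul_apply, freeAct_bras_of_not_prefix h, freeAct_none]

theorem act_nf_self (u v : List L) : act (nf u v) (some v) = some u := by
  simpa using act_nf_append u v []

theorem exists_append_of_act_nf_eq {u v u' v' : List L} (h : act (nf u v) = act (nf u' v')) :
    ∃ s, v = v' ++ s ∧ u = u' ++ s := by
  have hv := act_nf_self u v
  by_cases hp : v' <+: v
  · obtain ⟨s, rfl⟩ := hp
    rw [h, act_nf_append] at hv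
    exact ⟨s, rfl, (Option.some_injective _ hv).symm⟩
  · rw [h, act_nf_of_not_prefix u' hp] at hv
    exact absurd hv.symm (Option.some_ne_none u)

theorem act_injective :
    Function.Injective (act : Bracket L →* Function.End (Option (List L))) := by
  have act_zero_ne (u v : List L) : act (0 : Bracket L) ≠ act (nf u v) := fun h => by
    simpa [← h, act_zero] using act_nf_self u v
  intro a b h
  rcases eq_zero_or_eq_nf a with rfl | ⟨u, v, rfl⟩ <;>
    rcases eq_zero_or_eq_nf b with rfl | ⟨u', v', rfl⟩
  · rfl
  · exact absurd h (act_zero_ne u' v')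
  · exact absurd h.symm (act_zero_ne u v)
  · obtain ⟨s, rfl, rfl⟩ := exists_append_of_act_nf_eq h
    obtain ⟨s', hv, -⟩ := exists_append_of_act_nf_eq h.symm
    obtain ⟨rfl, -⟩ : s = [] ∧ s' = [] := by simpa using hv
    simp

theorem eq_of_isIdempotentElem_nf {u v : List L} (h : IsIdempotentElem (nf u v)) : u = v := by
  have hu : act (nf u v) (some u) = some u :=
    calc act (nf u v) (some u) = act (nf u v * nf u v) (some v) := by
          rw [act_mul_apply, act_nf_self]
      _ = some u := by rw [h.eq, act_nf_self]
  by_cases hp : v <+: u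
  · obtain ⟨s, rfl⟩ := hp
    rw [act_nf_append, Option.some_inj, List.append_right_eq_self] at hu
    simp [hu]
  · rw [act_nf_of_not_prefix u hp] at hu
    exact absurd hu (Option.some_ne_none u).symm

theorem act_nf_self_of_prefix {u t : List L} (h : u <+: t) : act (nf u u) (some t) = some t := by
  obtain ⟨s, rfl⟩ := h
  exact act_nf_append u u s

theorem commute_nf_self (u u' : List L) : Commute (nf u u) (nf u' u') := by
  refine act_injective (funext fun o => ?_)
  rw [act_mul_apply, act_mul_apply]
  rcases o with _ | t
  · rw [act_none, act_none, act_none]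
  by_cases h : u <+: t <;> by_cases h' : u' <+: t <;>
    simp [act_nf_self_of_prefix, act_nf_of_not_prefix, act_none, h, h']

theorem isIdempotentElem_commute {e f : Bracket L} (he : IsIdempotentElem e)
    (hf : IsIdempotentElem f) : Commute e f := by
  rcases eq_zero_or_eq_nf e with rfl | ⟨u, v, rfl⟩
  · exact Commute.zero_left f
  rcases eq_zero_or_eq_nf f with rfl | ⟨u', v', rfl⟩
  · exact Commute.zero_right _
  obtain rfl := eq_of_isIdempotentElem_nf he
  obtain rfl := eq_of_isIdempotentElem_nf hf
  exact commute_nf_self u u'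

def swap : D L → D L :=
  Sum.elim (fun x => .inr (.inl x)) (Sum.elim (fun x => .inl x) fun _ => .inr (.inr ()))

def inv (w : FreeMonoid (D L)) : FreeMonoid (D L) :=
  .ofList ((FreeMonoid.toList w).reverse.map swap)

theorem inv_mul (a b : FreeMonoid (D L)) : inv (a * b) = inv b * inv a := by
  simp [inv, FreeMonoid.toList_mul, FreeMonoid.ofList_append]

theorem inv_inv (w : FreeMonoid (D L)) : inv (inv w) = w := by
  have : swap ∘ swap = (id : D L → D L) := by
    funext x; rcases x with _ | _ | _ <;> rfl
  simp [inv, List.map_reverse, this]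

theorem inv_kets (u : List L) : inv (kets u) = bras u := by
  simp only [inv, kets, bras, FreeMonoid.toList_ofList, List.map_reverse, List.map_map]; rfl

theorem inv_bras (v : List L) : inv (bras v) = kets v := by
  rw [← inv_kets, inv_inv]

theorem mk_inv_eq_mk_inv {a b : FreeMonoid (D L)} (h : mk a = mk b) :
    mk (inv a) = mk (inv b) := by
  have hab : ConGen.Rel rel a b := (Con.eq _).1 h
  clear h
  induction hab with
  | of a b hab =>
    rcases hab with ⟨x, y, hxy, rfl, rfl⟩ | ⟨x, rfl, rfl⟩ | ⟨w, rfl, rfl⟩ | ⟨w, rfl, rfl⟩ <;>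
      rw [inv_mul]
    · exact mk_bra_mul_ket_of_ne hxy.symm
    · exact mk_bra_mul_ket_self x
    · rw [map_mul]; exact mul_zero _
    · rw [map_mul]; exact zero_mul _
  | refl => rfl
  | symm _ ih => exact ih.symm
  | trans _ _ ih₁ ih₂ => exact ih₁.trans ih₂
  | mul _ _ ih₁ ih₂ => rw [inv_mul, inv_mul, map_mul, map_mul, ih₁, ih₂]

theorem mk_mul_inv_mul (w : FreeMonoid (D L)) : mk (w * inv w * w) = mk w := by
  rw [map_mul, map_mul]
  rcases eq_zero_or_eq_nf (mk w) with h | ⟨u, v, h⟩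
  · rw [h, mul_zero]
  · have h_inv : mk (inv w) = nf v u := by
      rw [mk_inv_eq_mk_inv h, nf, inv_mul, inv_kets, inv_bras]
    rw [h, h_inv, nf_mul_nf, nf_mul_nf]

end BracketMonoid

/-- Every bracket semigroup is an inverse semigroup: in the quotient of the free
monoid on `D(L) = {|x⟩} ∪ {⟨x|} ∪ {0}` by the congruence generated by `⟨x||y⟩ ≡ 0` (`x ≠ y`),
`⟨x||x⟩ ≡ 1` and `0` absorbing, each element `w = x₁…xₙ` has the unique generalized inverse
`w⁻¹ = xₙ⁻¹…x₁⁻¹` (with `|x⟩⁻¹ = ⟨x|`, `⟨x|⁻¹ = |x⟩`, `0⁻¹ = 0`) satisfying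
`w w⁻¹ w = w` and `w⁻¹ w w⁻¹ = w⁻¹`. -/
theorem stmt15 (L : Type*) :
    let ket : L → FreeMonoid (L ⊕ L ⊕ Unit) := fun x => FreeMonoid.of (Sum.inl x)
    let bra : L → FreeMonoid (L ⊕ L ⊕ Unit) := fun x => FreeMonoid.of (Sum.inr (Sum.inl x))
    let z : FreeMonoid (L ⊕ L ⊕ Unit) := FreeMonoid.of (Sum.inr (Sum.inr ()))
    let rel : FreeMonoid (L ⊕ L ⊕ Unit) → FreeMonoid (L ⊕ L ⊕ Unit) → Prop := fun a b =>
      (∃ x y : L, x ≠ y ∧ a = bra x * ket y ∧ b = z) ∨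
      (∃ x : L, a = bra x * ket x ∧ b = 1) ∨
      (∃ w, a = z * w ∧ b = z) ∨ (∃ w, a = w * z ∧ b = z)
    let c : Con (FreeMonoid (L ⊕ L ⊕ Unit)) := conGen rel
    let swap : (L ⊕ L ⊕ Unit) → (L ⊕ L ⊕ Unit) :=
      Sum.elim (fun x => Sum.inr (Sum.inl x))
        (Sum.elim (fun x => Sum.inl x) (fun _ => Sum.inr (Sum.inr ())))
    let inv : FreeMonoid (L ⊕ L ⊕ Unit) → FreeMonoid (L ⊕ L ⊕ Unit) :=
      fun w => FreeMonoid.ofList ((FreeMonoid.toList w).reverse.map swap)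
    ∀ w : FreeMonoid (L ⊕ L ⊕ Unit),
      c.mk' (w * inv w * w) = c.mk' w ∧
      c.mk' (inv w * w * inv w) = c.mk' (inv w) ∧
      ∀ v : c.Quotient, c.mk' w * v * c.mk' w = c.mk' w → v * c.mk' w * v = v →
        v = c.mk' (inv w) := by
  intro _ _ _ _ _ _ _ w
  have h₁ := BracketMonoid.mk_mul_inv_mul w
  have h₂ := BracketMonoid.mk_mul_inv_mul (BracketMonoid.inv w)
  rw [BracketMonoid.inv_inv] at h₂
  refine ⟨h₁, h₂, fun v hv₁ hv₂ => ?_⟩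
  rw [map_mul, map_mul] at h₁ h₂
  exact eq_of_inverses_of_idempotents_commute
    (fun _ _ => BracketMonoid.isIdempotentElem_commute) hv₁ hv₂ h₁ h₂
end

section
/- A valid link grammar parse yields an idempotent in the free inverse semigroup: if a sequence of disjuncts over link types A forms a link grammar parse (every left connector is matched with a right connector of the same type to its right, every connector matched exactly once, no links cross), then the product in the free inverse semigroup FIS(A) of the corresponding elements (left connector of type a ↦ a, right connector of type a ↦ a⁻¹) is an idempotent. -/
/-!
Idempotents of an inverse semigroup are closed under products and commute; in particular
`e` commutes with the idempotent `s⁻¹ s`, which makes `s e s⁻¹` idempotent whenever `e` is.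
A matched non-crossing word `a y a⁻¹ z` evaluates to `(a [y] a⁻¹) [z]`, a product of two
idempotents by induction.
-/

/-- Matched non-crossing words over the alphabet `A ⊕ A` (where `Sum.inl a` is a left
connector / generator `a` and `Sum.inr a` is a right connector / inverse `a⁻¹`): exactly the
words of the form `a · y · a⁻¹ · z` with `y`, `z` matched non-crossing, or empty. -/
inductive MNC {A : Type*} : List (A ⊕ A) → Prop
  | nil : MNC []
  | node (a : A) {y z : List (A ⊕ A)} : MNC y → MNC z →
      MNC (Sum.inl a :: (y ++ Sum.inr a :: z))

structure IsInverseSemigroupInv {S : Type*} [Mul S] (inv : S → S) : Prop where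
  mul_inv_mul : ∀ s, s * inv s * s = s
  inv_mul_inv : ∀ s, inv s * s * inv s = inv s
  eq_inv : ∀ s t, s * t * s = s → t * s * t = t → t = inv s

namespace IsInverseSemigroupInv

variable {S : Type*} [Semigroup S] {inv : S → S}

lemma inv_eq_self_of_isIdempotentElem (h : IsInverseSemigroupInv inv) {e : S}
    (he : IsIdempotentElem e) : inv e = e :=
  (h.eq_inv e e (by rw [he.eq, he.eq]) (by rw [he.eq, he.eq])).symm

lemma isIdempotentElem_inv_mul (h : IsInverseSemigroupInv inv) (s : S) :
    IsIdempotentElem (inv s * s) := by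
  rw [IsIdempotentElem, ← mul_assoc, h.inv_mul_inv]

/-- The inverse `u` of `e * f` equals `f * u * e`, which is idempotent; hence so is
`e * f = inv u = u`. -/
lemma isIdempotentElem_mul (h : IsInverseSemigroupInv inv) {e f : S}
    (he : IsIdempotentElem e) (hf : IsIdempotentElem f) : IsIdempotentElem (e * f) := by
  set u := inv (e * f)
  have hu₁ : e * f * u * (e * f) = e * f := h.mul_inv_mul (e * f)
  have hu₂ : u * (e * f) * u = u := h.inv_mul_inv (e * f)
  have hfue : f * u * e = u := by
    refine h.eq_inv (e * f) (f * u * e) ?_ ?_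
    · calc e * f * (f * u * e) * (e * f) = e * (f * f) * u * (e * e) * f := by
            simp only [mul_assoc]
        _ = e * f * u * (e * f) := by rw [he.eq, hf.eq]; simp only [mul_assoc]
        _ = e * f := hu₁
    · calc f * u * e * (e * f) * (f * u * e) = f * (u * (e * e) * (f * f) * u) * e := by
            simp only [mul_assoc]
        _ = f * u * e := by rw [he.eq, hf.eq, mul_assoc u e f, hu₂, mul_assoc]
  have hu : IsIdempotentElem u := by
    calc u * u = f * (u * (e * f) * u) * e := by
          conv_lhs => rw [← hfue]
          simp only [mul_assoc]
      _ = u := by rw [hu₂, hfue]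
  rw [h.eq_inv u (e * f) hu₂ hu₁, h.inv_eq_self_of_isIdempotentElem hu]
  exact hu

lemma commute_of_isIdempotentElem (h : IsInverseSemigroupInv inv) {e f : S}
    (he : IsIdempotentElem e) (hf : IsIdempotentElem f) : Commute e f := by
  have hef := h.isIdempotentElem_mul he hf
  have hfe := h.isIdempotentElem_mul hf he
  have hfe_inv : f * e = inv (e * f) := by
    refine h.eq_inv (e * f) (f * e) ?_ ?_
    · calc e * f * (f * e) * (e * f) = e * (f * f) * (e * e) * f := by simp only [mul_assoc]
        _ = e * f * (e * f) := by rw [he.eq, hf.eq]; simp only [mul_assoc]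
        _ = e * f := hef.eq
    · calc f * e * (e * f) * (f * e) = f * (e * e) * (f * f) * e := by simp only [mul_assoc]
        _ = f * e * (f * e) := by rw [he.eq, hf.eq]; simp only [mul_assoc]
        _ = f * e := hfe.eq
  rw [Commute, SemiconjBy, hfe_inv, h.inv_eq_self_of_isIdempotentElem hef]

lemma isIdempotentElem_conj (h : IsInverseSemigroupInv inv) {e : S}
    (he : IsIdempotentElem e) (s : S) : IsIdempotentElem (s * e * inv s) := by
  have hcomm := h.commute_of_isIdempotentElem he (h.isIdempotentElem_inv_mul s)
  calc s * e * inv s * (s * e * inv s) = s * (e * (inv s * s)) * e * inv s := by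
        simp only [mul_assoc]
    _ = s * inv s * s * (e * e) * inv s := by rw [hcomm.eq]; simp only [mul_assoc]
    _ = s * e * inv s := by rw [h.mul_inv_mul, he.eq]

end IsInverseSemigroupInv

/-- A valid link grammar parse yields an idempotent in the free inverse
semigroup: the product of the elements corresponding to a matched non-crossing sequence of
connectors (left connector of type `a` ↦ `g a`, right connector of type `a` ↦ `(g a)⁻¹`) is
idempotent in any inverse semigroup (with identity adjoined), in particular in `FIS(A)`. -/
theorem stmt18 {A S : Type*} [Monoid S] (inv : S → S)
    (hinv : ∀ s : S, s * inv s * s = s ∧ inv s * s * inv s = inv s)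
    (huniq : ∀ s t : S, s * t * s = s → t * s * t = t → t = inv s)
    (g : A → S) (l : List (A ⊕ A)) (hl : MNC l) :
    ((l.map (Sum.elim g (fun a => inv (g a)))).prod) *
        ((l.map (Sum.elim g (fun a => inv (g a)))).prod)
      = (l.map (Sum.elim g (fun a => inv (g a)))).prod := by
  have h : IsInverseSemigroupInv inv := ⟨fun s => (hinv s).1, fun s => (hinv s).2, huniq⟩
  change IsIdempotentElem _
  induction hl with
  | nil => exact .one
  | node a _ _ ihy ihz =>
    simp only [List.map_cons, List.map_append, List.prod_cons, List.prod_append, Sum.elim_inl,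
      Sum.elim_inr, ← mul_assoc]
    exact h.isIdempotentElem_mul (h.isIdempotentElem_conj ihy (g a)) ihz
end
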